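/- Let (L,E,R,∂₂,∂₁,{,}) be a 2-crossed module of commutative algebras. The formula e▶¹_e(e',l,l') = (ee', ∂₁(e)▶l − {e'⊗e}, ∂₁(e)▶l') defines an algebra action of E on the iterated semidirect product (E⋉_{▶'}L)⋉_{▶*}L. -/

import Mathlib

/-- An action of a commutative `k`-algebra `R` on a commutative `k`-algebra `M`:
a `k`-bilinear map satisfying `r▶(mm') = (r▶m)m' = m(r▶m')` and `(rr')▶m = r▶(r'▶m)`. -/
structure AlgAction (k R M : Type*) [CommRing k] [CommRing R] [CommRing M]
    [Algebra k R] [Algebra k M] where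
  act : R →ₗ[k] M →ₗ[k] M
  a1 : ∀ (r : R) (m m' : M), act r (m * m') = act r m * m'
  a1' : ∀ (r : R) (m m' : M), act r (m * m') = m * act r m'
  a2 : ∀ (r r' : R) (m : M), act (r * r') m = act r (act r' m)

/-- A 2-crossed module of commutative `k`-algebras, with Peiffer lifting `lift e e' = {e ⊗ e'}`.
The action `e ▶' l` of `E` on `L` is `lift e (d2 l)` (axiom 2XM5 is definitional). -/
structure TwoCrossedModule (k L E R : Type*) [CommRing k] [CommRing L] [CommRing E] [CommRing R]
    [Algebra k L] [Algebra k E] [Algebra k R] where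
  actE : AlgAction k R E
  actL : AlgAction k R L
  d2 : L →ₗ[k] E
  d1 : E →ₗ[k] R
  d2_mul : ∀ l l' : L, d2 (l * l') = d2 l * d2 l'
  d1_mul : ∀ e e' : E, d1 (e * e') = d1 e * d1 e'
  comp : ∀ l : L, d1 (d2 l) = 0
  d1_act : ∀ (r : R) (e : E), d1 (actE.act r e) = r * d1 e
  d2_act : ∀ (r : R) (l : L), d2 (actL.act r l) = actE.act r (d2 l)
  lift : E →ₗ[k] E →ₗ[k] L
  axm1 : ∀ e e' : E, d2 (lift e e') = e * e' - actE.act (d1 e') e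
  axm2 : ∀ l l' : L, lift (d2 l) (d2 l') = l * l'
  axm3 : ∀ e e' e'' : E, lift e (e' * e'') = lift (e * e') e'' + actL.act (d1 e'') (lift e e')
  axm4 : ∀ (l : L) (e : E), lift (d2 l) e = lift e (d2 l) - actL.act (d1 e) l
  axm6a : ∀ (r : R) (e e' : E), actL.act r (lift e e') = lift (actE.act r e) e'
  axm6b : ∀ (r : R) (e e' : E), actL.act r (lift e e') = lift e (actE.act r e')

/-!
Everything reduces to four identities for the Peiffer lifting. Writing
`ee₁ = ∂₁e ▶ e₁ + ∂₂{e₁ ⊗ e}` (2XM1) and using 2XM6, 2XM2 gives the expansion of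
`{ee₁ ⊗ ∂₂l}` that makes `e ▶¹ -` multiplicative in the `L`-coordinates; 2XM4, 2XM1 and 2XM3 turn
`{e₂ ⊗ ∂₂{e₁ ⊗ e}}` into `{e₁e₂ ⊗ e}`, which absorbs the correction term `-{e'⊗e}` of the
middle coordinate; and 2XM3 once more gives `(ee') ▶¹ - = e ▶¹ (e' ▶¹ -)`.
-/

namespace TwoCrossedModule

variable {k L E R : Type*} [CommRing k] [CommRing L] [CommRing E] [CommRing R]
    [Algebra k L] [Algebra k E] [Algebra k R] (T : TwoCrossedModule k L E R)

/-- Multiplication of the iterated semidirect product `(E ⋉_{▶'} L) ⋉_{▶*} L`. -/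
def semidirectMul (p q : E × L × L) : E × L × L :=
  (p.1 * q.1,
    T.lift p.1 (T.d2 q.2.1) + T.lift q.1 (T.d2 p.2.1) + p.2.1 * q.2.1,
    (T.lift p.1 (T.d2 q.2.2) + p.2.1 * q.2.2)
      + (T.lift q.1 (T.d2 p.2.2) + q.2.1 * p.2.2) + p.2.2 * q.2.2)

def semidirectAct (e : E) (p : E × L × L) : E × L × L :=
  (e * p.1, T.actL.act (T.d1 e) p.2.1 - T.lift p.1 e, T.actL.act (T.d1 e) p.2.2)

lemma lift_mul_d2 (e e₁ : E) (l : L) :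
    T.lift (e * e₁) (T.d2 l) = T.actL.act (T.d1 e) (T.lift e₁ (T.d2 l)) + T.lift e₁ e * l := by
  have h : e * e₁ = T.actE.act (T.d1 e) e₁ + T.d2 (T.lift e₁ e) := by
    rw [T.axm1]; ring
  rw [h, map_add, LinearMap.add_apply, T.axm6a, T.axm2]

lemma lift_d2_lift (e e₁ e₂ : E) :
    T.lift e₂ (T.d2 (T.lift e₁ e)) = T.lift (e₁ * e₂) e := by
  have h₄ : T.lift e₂ (T.d2 (T.lift e₁ e)) =
      T.lift (T.d2 (T.lift e₁ e)) e₂ + T.actL.act (T.d1 e₂) (T.lift e₁ e) := by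
    rw [T.axm4]; ring
  have h₁ : T.lift (T.d2 (T.lift e₁ e)) e₂ =
      T.lift (e₁ * e) e₂ - T.actL.act (T.d1 e) (T.lift e₁ e₂) := by
    rw [T.axm1, map_sub, LinearMap.sub_apply, T.axm6a]
  have h₃ : T.lift (e₁ * e) e₂ = T.lift (e₁ * e₂) e + T.actL.act (T.d1 e) (T.lift e₁ e₂)
      - T.actL.act (T.d1 e₂) (T.lift e₁ e) := by
    -- expand `{e₁ ⊗ e e₂} = {e₁ ⊗ e₂ e}` by 2XM3 in both orders
    have h := T.axm3 e₁ e₂ e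
    rw [mul_comm e₂ e, T.axm3] at h
    linear_combination h
  rw [h₄, h₁, h₃]; ring

lemma lift_d2_actL_d1 (e e₂ : E) (l : L) :
    T.lift e₂ (T.d2 (T.actL.act (T.d1 e) l)) = T.actL.act (T.d1 e) (T.lift e₂ (T.d2 l)) := by
  rw [T.d2_act, ← T.axm6b]

lemma lift_mul_right (e e' e₁ : E) :
    T.lift e₁ (e * e') = T.actL.act (T.d1 e) (T.lift e₁ e') + T.lift (e' * e₁) e := by
  rw [mul_comm e e', T.axm3, mul_comm e₁ e']; ring

lemma semidirectAct_add_left (e e' : E) (p : E × L × L) :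
    T.semidirectAct (e + e') p = T.semidirectAct e p + T.semidirectAct e' p := by
  simp only [semidirectAct, Prod.mk_add_mk, map_add, LinearMap.add_apply, Prod.mk.injEq]
  exact ⟨by ring, by ring, trivial⟩

lemma semidirectAct_add_right (e : E) (p q : E × L × L) :
    T.semidirectAct e (p + q) = T.semidirectAct e p + T.semidirectAct e q := by
  simp only [semidirectAct, Prod.fst_add, Prod.snd_add, Prod.mk_add_mk, map_add,
    LinearMap.add_apply, Prod.mk.injEq]
  exact ⟨by ring, by ring, trivial⟩

lemma semidirectAct_smul_left (c : k) (e : E) (p : E × L × L) :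
    T.semidirectAct (c • e) p = c • T.semidirectAct e p := by
  simp only [semidirectAct, Prod.smul_mk, map_smul, LinearMap.smul_apply, smul_mul_assoc,
    smul_sub]

lemma semidirectAct_smul_right (c : k) (e : E) (p : E × L × L) :
    T.semidirectAct e (c • p) = c • T.semidirectAct e p := by
  simp only [semidirectAct, Prod.smul_fst, Prod.smul_snd, Prod.smul_mk, map_smul,
    LinearMap.smul_apply, mul_smul_comm, smul_sub]

lemma semidirectAct_semidirectMul (e : E) (p q : E × L × L) :
    T.semidirectAct e (T.semidirectMul p q) = T.semidirectMul (T.semidirectAct e p) q := by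
  obtain ⟨e₁, l₁, m₁⟩ := p
  obtain ⟨e₂, l₂, m₂⟩ := q
  simp only [semidirectAct, semidirectMul, Prod.mk.injEq, map_add, map_sub]
  refine ⟨by ring, ?_, ?_⟩
  · rw [T.lift_mul_d2 e e₁ l₂, T.lift_d2_actL_d1 e e₂ l₁, T.lift_d2_lift e e₁ e₂,
      T.actL.a1 (T.d1 e) l₁ l₂]
    ring
  · rw [T.lift_mul_d2 e e₁ m₂, T.lift_d2_actL_d1 e e₂ m₁, T.actL.a1 (T.d1 e) l₁ m₂,
      T.actL.a1' (T.d1 e) l₂ m₁, T.actL.a1 (T.d1 e) m₁ m₂]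
    ring

lemma semidirectAct_mul (e e' : E) (p : E × L × L) :
    T.semidirectAct (e * e') p = T.semidirectAct e (T.semidirectAct e' p) := by
  simp only [semidirectAct, T.d1_mul, T.actL.a2, map_sub, Prod.mk.injEq]
  refine ⟨by ring, ?_, trivial⟩
  rw [T.lift_mul_right e e' p.1]
  ring

end TwoCrossedModule

/-- `e ▶¹ (e',l,l') = (ee', ∂₁(e)▶l - {e'⊗e}, ∂₁(e)▶l')` is an algebra
action of `E` on `(E ⋉ L) ⋉ L`. -/
theorem stmt10 (k L E R : Type*) [CommRing k] [CommRing L] [CommRing E] [CommRing R]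
    [Algebra k L] [Algebra k E] [Algebra k R] (T : TwoCrossedModule k L E R) :
    ∀ (mul3 : E × L × L → E × L × L → E × L × L) (eact : E → E × L × L → E × L × L),
      (mul3 = fun p q => (p.1 * q.1,
        T.lift p.1 (T.d2 q.2.1) + T.lift q.1 (T.d2 p.2.1) + p.2.1 * q.2.1,
        (T.lift p.1 (T.d2 q.2.2) + p.2.1 * q.2.2)
          + (T.lift q.1 (T.d2 p.2.2) + q.2.1 * p.2.2) + p.2.2 * q.2.2)) →
      (eact = fun e p => (e * p.1, T.actL.act (T.d1 e) p.2.1 - T.lift p.1 e,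
        T.actL.act (T.d1 e) p.2.2)) →
      (∀ e e' p, eact (e + e') p = eact e p + eact e' p) ∧
      (∀ e p q, eact e (p + q) = eact e p + eact e q) ∧
      (∀ (c : k) e p, eact (c • e) p = c • eact e p) ∧
      (∀ (c : k) e p, eact e (c • p) = c • eact e p) ∧
      (∀ e p q, eact e (mul3 p q) = mul3 (eact e p) q) ∧
      (∀ e e' p, eact (e * e') p = eact e (eact e' p)) := by
  rintro mul3 eact rfl rfl
  exact ⟨T.semidirectAct_add_left, T.semidirectAct_add_right, T.semidirectAct_smul_left,
    T.semidirectAct_smul_right, T.semidirectAct_semidirectMul, T.semidirectAct_mul⟩
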